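/- arXiv:1612.08048 — 8 statements merged into one kernel-verified Lean document; each statement's English description precedes it below -/
import Mathlib

section
/- In a Boolean DeGroot process, the opinion stream starting from opinion profile O on influence profile G converges if and only if for every issue p there is no cycle S in the graph G_p containing two agents i, j with O_i(p) ≠ O_j(p). -/
/-- One step of the Boolean DeGroot process: each agent copies, on each issue `p`,
the opinion of its unique influencer `r p i`. -/
def bdpStep {N P : Type*} (r : P → N → N) (O : N → P → Bool) : N → P → Bool :=
  fun i p => O (r p i) p

/-- `S` is a cycle of the endomap `f`: nonempty, closed under `f`, and any member
reachable from any other by iterating `f`. -/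
def IsCycleIn {N : Type*} (f : N → N) (S : Set N) : Prop :=
  S.Nonempty ∧ (∀ i ∈ S, f i ∈ S) ∧ ∀ i ∈ S, ∀ j ∈ S, ∃ m : ℕ, f^[m] i = j

lemma bdp_iter_eval {N P : Type*} (r : P → N → N) (O : N → P → Bool) (m : ℕ) (i : N) (p : P) :
    (bdpStep r)^[m] O i p = O ((r p)^[m] i) p := by
  induction m generalizing O with
  | zero => rfl
  | succ m ih =>
    rw [Function.iterate_succ_apply, ih, Function.iterate_succ_apply']
    rfl

lemma bdp_eventually_const {N : Type*} [Fintype N] (f : N → N) (i : N) (g : N → Bool)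
    (hcyc : ∀ S : Set N, IsCycleIn f S → ∀ x ∈ S, ∀ y ∈ S, g x = g y) :
    ∃ a : ℕ, ∀ m, a ≤ m → g (f^[m] i) = g (f^[a] i) := by
  obtain ⟨a, b, hab, heq⟩ : ∃ a b : ℕ, a < b ∧ f^[a] i = f^[b] i := by
    obtain ⟨a, b, hne, h⟩ := Finite.exists_ne_map_eq_of_infinite (fun m : ℕ => f^[m] i)
    rcases lt_or_gt_of_ne hne with h' | h'
    · exact ⟨a, b, h', h⟩
    · exact ⟨b, a, h', h.symm⟩
  set d : ℕ := b - a with hd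
  have hdpos : 0 < d := by omega
  have per : ∀ m, a ≤ m → f^[m + d] i = f^[m] i := by
    intro m hm
    obtain ⟨t, rfl⟩ := Nat.exists_eq_add_of_le hm
    have h1 : a + t + d = t + b := by omega
    rw [h1, Function.iterate_add_apply, ← heq, ← Function.iterate_add_apply, Nat.add_comm]
  have key : ∀ k m, a ≤ m → f^[m + k * d] i = f^[m] i := by
    intro k
    induction k with
    | zero => intro m hm; simp
    | succ k ih =>
      intro m hm
      have h1 : m + (k + 1) * d = (m + d) + k * d := by ring
      rw [h1, ih (m + d) (by omega), per m hm]
  set S : Set N := {x | ∃ m, a ≤ m ∧ f^[m] i = x} with hS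
  have hScyc : IsCycleIn f S := by
    refine ⟨⟨f^[a] i, a, le_refl a, rfl⟩, ?_, ?_⟩
    · rintro x ⟨m, hm, rfl⟩
      exact ⟨m + 1, by omega, by rw [Function.iterate_succ_apply']⟩
    · rintro x ⟨m1, hm1, rfl⟩ y ⟨m2, hm2, rfl⟩
      refine ⟨m2 + m1 * d - m1, ?_⟩
      rw [← Function.iterate_add_apply]
      have h1 : m2 + m1 * d - m1 + m1 = m2 + m1 * d := by
        have : m1 ≤ m1 * d := Nat.le_mul_of_pos_right m1 hdpos
        omega
      rw [h1, key m1 m2 hm2]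
  exact ⟨a, fun m hm => hcyc S hScyc _ ⟨m, hm, rfl⟩ _ ⟨a, le_refl a, rfl⟩⟩

/-- A BDP converges from `O` iff on no issue some cycle contains two disagreeing agents. -/
theorem stmt9 {N P : Type*} [Fintype N] [Fintype P] (r : P → N → N) (O : N → P → Bool) :
    (∃ n : ℕ, ∀ m, n ≤ m → (bdpStep r)^[m] O = (bdpStep r)^[n] O) ↔
      ∀ p : P, ∀ S : Set N, IsCycleIn (r p) S →
        ∀ i ∈ S, ∀ j ∈ S, O i p = O j p := by
  constructor
  · rintro ⟨n, hn⟩ p S ⟨hne, hcl, hreach⟩ i hi j hj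
    set f := r p with hf
    obtain ⟨m0, hm0⟩ := hreach (f i) (hcl i hi) i hi
    have hk : f^[m0 + 1] i = i := by rw [Function.iterate_succ_apply]; exact hm0
    obtain ⟨t, ht⟩ := hreach i hi j hj
    set m1 := (m0 + 1) * (n + 1) with hm1def
    have hm1 : n ≤ m1 := by rw [hm1def]; nlinarith
    have hfix : f^[m1] i = i := by
      rw [hm1def, Function.iterate_mul]
      exact Function.iterate_fixed hk (n + 1)
    have e1 := congrFun (congrFun (hn m1 hm1) i) p
    have e2 := congrFun (congrFun (hn (t + m1) (le_trans hm1 (Nat.le_add_left _ _))) i) p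
    rw [bdp_iter_eval] at e1 e2
    have h2 : f^[t + m1] i = j := by
      rw [Function.iterate_add_apply, hfix, ht]
    rw [hfix] at e1
    rw [h2] at e2
    rw [e1, e2]
  · intro h
    have key : ∀ (p : P) (i : N), ∃ a, ∀ m, a ≤ m →
        O ((r p)^[m] i) p = O ((r p)^[a] i) p :=
      fun p i => bdp_eventually_const (r p) i (fun x => O x p) (h p)
    choose a ha using key
    refine ⟨Finset.univ.sup (fun q : P × N => a q.1 q.2), fun m hm => ?_⟩
    funext i p
    have hle : a p i ≤ Finset.univ.sup (fun q : P × N => a q.1 q.2) :=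
      Finset.le_sup (f := fun q : P × N => a q.1 q.2) (Finset.mem_univ (p, i))
    rw [bdp_iter_eval, bdp_iter_eval, ha p i m (le_trans hle hm), ha p i _ hle]
end

section
/- Let G be an influence profile (for each issue p, a serial functional graph G_p on a finite set N). The following are equivalent: (1) the Boolean DeGroot process converges for every initial opinion profile; (2) for every p, G_p contains no cycle of length ≥ 2 (equivalently, every cycle of the endomap r_p is a fixpoint). -/
/-- All initial opinion profiles converge iff no influence graph has a cycle of
length ≥ 2 (every cycle of the endomap is a fixpoint). -/
theorem stmt10 {N P : Type*} [Fintype N] [Fintype P] (r : P → N → N) :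
    (∀ O : N → P → Bool, ∃ n : ℕ, ∀ m, n ≤ m →
        (bdpStep r)^[m] O = (bdpStep r)^[n] O) ↔
      ∀ (p : P) (i : N) (k : ℕ), 0 < k → (r p)^[k] i = i → r p i = i := by
  have iter_eval : ∀ (m : ℕ) (O : N → P → Bool) (i : N) (p : P),
      (bdpStep r)^[m] O i p = O ((r p)^[m] i) p := by
    intro m
    induction m with
    | zero => intro O i p; rfl
    | succ m ih =>
      intro O i p
      rw [Function.iterate_succ_apply', Function.iterate_succ_apply]
      exact ih O (r p i) p
  constructor
  · intro h p i k hk hki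
    classical
    by_contra hne
    obtain ⟨n, hn⟩ := h (fun j _ => decide (j = i))
    have hm1 : n ≤ k * (n + 1) := by nlinarith
    have h1 := hn (k * (n + 1)) hm1
    have h2 := hn (k * (n + 1) + 1) (le_trans hm1 (Nat.le_succ _))
    have hcyc : (r p)^[k * (n + 1)] i = i := by
      rw [Function.iterate_mul]
      exact Function.iterate_fixed hki (n + 1)
    have e1 : (bdpStep r)^[k * (n + 1)] (fun j _ => decide (j = i)) i p = true := by
      rw [iter_eval, hcyc]; simp
    have e2 : (bdpStep r)^[k * (n + 1) + 1] (fun j _ => decide (j = i)) i p = false := by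
      rw [iter_eval, Function.iterate_succ_apply', hcyc]
      simpa using hne
    rw [h1] at e1
    rw [h2] at e2
    rw [e1] at e2
    exact absurd e2 (by simp)
  · intro h O
    refine ⟨Fintype.card N, fun m hm => ?_⟩
    have aux : ∀ (p : P) (i : N) (a b : ℕ), a < b → (r p)^[b] i = (r p)^[a] i →
        ∀ t, a ≤ t → (r p)^[t] i = (r p)^[a] i := by
      intro p i a b hab hjb t ht
      set j := (r p)^[a] i with hj
      have hfixj : (r p)^[b - a] j = j := by
        have : (r p)^[b - a + a] i = j := by
          rw [Nat.sub_add_cancel hab.le]; exact hjb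
        rwa [Function.iterate_add_apply] at this
      have hrj : r p j = j := h p j (b - a) (Nat.sub_pos_of_lt hab) hfixj
      have : (r p)^[t - a + a] i = (r p)^[t - a] j := by
        rw [Function.iterate_add_apply]
      rw [Nat.sub_add_cancel ht] at this
      rw [this]
      exact Function.iterate_fixed hrj _
    have key : ∀ (p : P) (i : N), (r p)^[m] i = (r p)^[Fintype.card N] i := by
      intro p i
      have hcard : Fintype.card N < Fintype.card (Fin (Fintype.card N + 1)) := by
        simp
      obtain ⟨x, y, hxy, hgxy⟩ :=
        Fintype.exists_ne_map_eq_of_card_lt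
          (fun t : Fin (Fintype.card N + 1) => (r p)^[(t : ℕ)] i) hcard
      rcases lt_or_gt_of_ne (fun hc => hxy (Fin.ext hc) : (x : ℕ) ≠ (y : ℕ)) with hlt | hlt
      · have haN : (x : ℕ) ≤ Fintype.card N := Nat.lt_succ_iff.mp x.isLt
        rw [aux p i x y hlt (by simpa using hgxy.symm) m (haN.trans hm),
            aux p i x y hlt (by simpa using hgxy.symm) (Fintype.card N) haN]
      · have haN : (y : ℕ) ≤ Fintype.card N := Nat.lt_succ_iff.mp y.isLt
        rw [aux p i y x hlt (by simpa using hgxy) m (haN.trans hm),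
            aux p i y x hlt (by simpa using hgxy) (Fintype.card N) haN]
    funext i p
    rw [iter_eval, iter_eval, key p i]
end

section
/- In a Boolean DeGroot process on influence graph G_p with endomap r_p, if a cycle S of length k ≥ 2 contains agents i, j at distance d along the cycle with O_i(p) ≠ O_j(p), then agent i's opinion never stabilizes: for all x ∈ ℕ, O_i^{x·k}(p) ≠ O_i^{x·k + d}(p). -/
/-- One step of the (single-issue) Boolean DeGroot process. -/
def bstep {N : Type*} (f : N → N) (O : N → Bool) : N → Bool := fun i => O (f i)

lemma bstep_iter {N : Type*} (f : N → N) (O : N → Bool) (n : ℕ) (i : N) :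
    (bstep f)^[n] O i = O (f^[n] i) := by
  induction n generalizing O with
  | zero => rfl
  | succ n ih =>
      rw [Function.iterate_succ_apply, Function.iterate_succ_apply']
      exact ih (bstep f O)

lemma cyc_iter {N : Type*} (f : N → N) (i : N) (k : ℕ) (hcyc : f^[k] i = i) (x : ℕ) :
    f^[x * k] i = i := by
  induction x with
  | zero => simp
  | succ x ih =>
      rw [Nat.succ_mul, Function.iterate_add_apply, hcyc, ih]

/-- If a cycle of length `k ≥ 2` contains two agents at distance `d` who disagree,
the first agent's opinion never stabilizes: it differs between steps `x·k` and `x·k+d`. -/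
theorem stmt11 {N : Type*} (f : N → N) (O : N → Bool) (i j : N) (k d : ℕ)
    (hk : 2 ≤ k) (hcyc : f^[k] i = i) (hd : 0 < d) (hdk : d < k)
    (hij : f^[d] i = j) (hdis : O i ≠ O j) :
    ∀ x : ℕ, (bstep f)^[x * k] O i ≠ (bstep f)^[x * k + d] O i := by
  intro x
  rw [bstep_iter, bstep_iter, add_comm, Function.iterate_add_apply,
    cyc_iter f i k hcyc x, hij]
  exact hdis
end

section
/- In a Boolean DeGroot process, if for every issue p all agents lying on cycles of G_p hold the same opinion within each cycle, then the process converges; moreover, if the graphs have diameter at most l, convergence occurs within l steps. -/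
lemma bdpStep_iterate {N P : Type*} (r : P → N → N) :
    ∀ (m : ℕ) (O : N → P → Bool) (i : N) (p : P),
      ((bdpStep r)^[m] O) i p = O ((r p)^[m] i) p := by
  intro m
  induction m with
  | zero => intro O i p; rfl
  | succ m ih =>
    intro O i p
    rw [Function.iterate_succ_apply, ih]
    show O ((r p) ((r p)^[m] i)) p = _
    rw [Function.iterate_succ_apply' (r p) m i]

/-- If on every issue all agents lying on a common cycle agree, the BDP converges,
and it does so within `l` steps where `l` bounds the diameters of the graphs
(every node reaches a cycle within `l` steps). -/
theorem stmt12 {N P : Type*} [Fintype N] (r : P → N → N) (O : N → P → Bool) (l : ℕ)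
    (hdiam : ∀ (p : P) (i : N), ∃ m ≤ l, ∃ k : ℕ, 0 < k ∧ (r p)^[k + m] i = (r p)^[m] i)
    (hcyc : ∀ (p : P) (i : N), (∃ k : ℕ, 0 < k ∧ (r p)^[k] i = i) →
      ∀ m : ℕ, O ((r p)^[m] i) p = O i p) :
    ∀ m, l ≤ m → (bdpStep r)^[m] O = (bdpStep r)^[l] O := by
  intro m hm
  funext i p
  rw [bdpStep_iterate, bdpStep_iterate]
  obtain ⟨m₀, hm₀, k, hk, hfix⟩ := hdiam p i
  set j := (r p)^[m₀] i with hj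
  have hjc : (r p)^[k] j = j := by
    rw [hj, ← Function.iterate_add_apply]; exact hfix
  have key : ∀ n, m₀ ≤ n → O ((r p)^[n] i) p = O j p := by
    intro n hn
    have : (r p)^[n] i = (r p)^[n - m₀] j := by
      rw [hj, ← Function.iterate_add_apply, Nat.sub_add_cancel hn]
    rw [this]
    exact hcyc p j ⟨k, hk, hjc⟩ (n - m₀)
  rw [key m (hm₀.trans hm), key l hm₀]
end

section
/- In a converging Boolean DeGroot process, within each connected component of G_p all agents end up with the same opinion on p; i.e., convergence implies consensus within each connected component. -/
/-- In a converging BDP, the limit profile is a consensus within each connected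
component of each influence graph. -/
theorem stmt13 {N P : Type*} [Fintype N] (r : P → N → N) (O : N → P → Bool) (n : ℕ)
    (hconv : ∀ m, n ≤ m → (bdpStep r)^[m] O = (bdpStep r)^[n] O) :
    ∀ (p : P) (i j : N), Relation.EqvGen (fun a b => r p a = b) i j →
      ((bdpStep r)^[n] O) i p = ((bdpStep r)^[n] O) j p := by
  have hfix : bdpStep r ((bdpStep r)^[n] O) = (bdpStep r)^[n] O := by
    have h := hconv (n + 1) (Nat.le_succ n)
    rwa [Function.iterate_succ_apply'] at h
  intro p i j h
  induction h with
  | rel a b hab =>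
      have := congrFun (congrFun hfix a) p
      simp only [bdpStep, hab] at this
      exact this.symm
  | refl a => rfl
  | symm a b _ ih => exact ih.symm
  | trans a b c _ _ ih1 ih2 => exact ih1.trans ih2
end

section
/- Consider the unanimity process (UP) on a serial (not necessarily functional) influence profile. If for some issue p and some connected component C of G_p every influence edge within C connects agents with differing opinions on p (i.e., the opinion assignment on p properly 2-colors C), then the opinion stream does not converge: every agent in C flips its opinion on p at every step. -/
open Classical in
/-- One step of the unanimity process: an agent adopts the unanimous opinion of its
influencers if they all disagree with her (equivalently, copies any unanimous
opinion), and keeps its opinion otherwise. -/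
noncomputable def upStep {N P : Type*} (R : P → N → N → Prop) (O : N → P → Bool) :
    N → P → Bool :=
  fun i p => if ∀ j, R p i j → O j p = !(O i p) then !(O i p) else O i p

/-- If on issue `p` the opinions properly 2-color a connected component `C`
(every influence edge in `C` links disagreeing agents), then every agent of `C`
flips its opinion on `p` at every step and the stream does not converge. -/
theorem stmt14 {N P : Type*} (R : P → N → N → Prop)
    (hser : ∀ (p : P) (i : N), ∃ j, R p i j)
    (O : N → P → Bool) (p : P) (i₀ : N)
    (C : Set N) (hC : C = {j | Relation.EqvGen (R p) i₀ j})
    (hdis : ∀ i ∈ C, ∀ j, R p i j → O i p ≠ O j p) :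
    (∀ i ∈ C, ∀ m : ℕ, ((upStep R)^[m] O) i p ≠ ((upStep R)^[m + 1] O) i p) ∧
    ¬ ∃ n : ℕ, ∀ m, n ≤ m → (upStep R)^[m] O = (upStep R)^[n] O := by
  have hclosed : ∀ i ∈ C, ∀ j, R p i j → j ∈ C := by
    intro i hi j hij
    rw [hC] at hi ⊢
    exact Relation.EqvGen.trans _ _ _ hi (Relation.EqvGen.rel i j hij)
  -- key invariant: at every stage, edges inside C connect disagreeing agents
  have key : ∀ m : ℕ, ∀ i ∈ C, ∀ j, R p i j →
      ((upStep R)^[m] O) i p ≠ ((upStep R)^[m] O) j p := by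
    intro m
    induction m with
    | zero => simpa using hdis
    | succ m ih =>
      have flip : ∀ i ∈ C, ((upStep R)^[m + 1] O) i p = !(((upStep R)^[m] O) i p) := by
        intro i hi
        rw [Function.iterate_succ_apply']
        show upStep R _ i p = _
        have h : ∀ j, R p i j → ((upStep R)^[m] O) j p = !(((upStep R)^[m] O) i p) := by
          intro j hij
          have := ih i hi j hij
          revert this
          cases ((upStep R)^[m] O) j p <;> cases ((upStep R)^[m] O) i p <;> simp
        simp only [upStep, if_pos h]
      intro i hi j hij
      have hj : j ∈ C := hclosed i hi j hij
      rw [flip i hi, flip j hj]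
      have := ih i hi j hij
      revert this
      cases ((upStep R)^[m] O) j p <;> cases ((upStep R)^[m] O) i p <;> simp
  have flips : ∀ i ∈ C, ∀ m : ℕ, ((upStep R)^[m] O) i p ≠ ((upStep R)^[m + 1] O) i p := by
    intro i hi m
    have flip : ((upStep R)^[m + 1] O) i p = !(((upStep R)^[m] O) i p) := by
      rw [Function.iterate_succ_apply']
      show upStep R _ i p = _
      have h : ∀ j, R p i j → ((upStep R)^[m] O) j p = !(((upStep R)^[m] O) i p) := by
        intro j hij
        have := key m i hi j hij
        revert this
        cases ((upStep R)^[m] O) j p <;> cases ((upStep R)^[m] O) i p <;> simp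
      simp only [upStep, if_pos h]
    rw [flip]
    cases ((upStep R)^[m] O) i p <;> simp
  refine ⟨flips, ?_⟩
  rintro ⟨n, hn⟩
  have hi₀ : i₀ ∈ C := by rw [hC]; exact Relation.EqvGen.refl i₀
  have := flips i₀ hi₀ n
  rw [hn (n + 1) (Nat.le_succ n)] at this
  exact this rfl
end

section
/- Let G be a symmetric serial influence profile and O an opinion profile. The unanimity process starting from O converges if and only if for every issue p and every connected component C of G_p there exist agents i, j ∈ C with i an influencer of j and O_i(p) = O_j(p). -/
open Classical in
/-- One step of the unanimity process on a single issue. -/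
noncomputable def istep {N : Type*} (r : N → N → Prop) (x : N → Bool) : N → Bool :=
  fun i => if ∀ j, r i j → x j = !(x i) then !(x i) else x i

lemma upStep_iter_eq {N P : Type*} (R : P → N → N → Prop) (O : N → P → Bool) (p : P) :
    ∀ m i, (upStep R)^[m] O i p = (istep (R p))^[m] (fun j => O j p) i := by
  intro m
  induction m with
  | zero => intro i; rfl
  | succ m ih =>
    intro i
    rw [Function.iterate_succ_apply', Function.iterate_succ_apply']
    have hfun : (fun j => (upStep R)^[m] O j p) = (istep (R p))^[m] (fun j => O j p) :=
      funext fun j => ih j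
    show istep (R p) (fun j => (upStep R)^[m] O j p) i = _
    rw [hfun]

section IStep
variable {N : Type*} {r : N → N → Prop}

lemma istep_flip {x : N → Bool} {k : N} (h : ∀ j, r k j → x j = !(x k)) :
    istep r x k = !(x k) := by
  unfold istep
  rw [if_pos h]

lemma istep_eq_of_agree {x : N → Bool} {i j : N} (h : r i j) (hx : x j = x i) :
    istep r x i = x i := by
  unfold istep
  rw [if_neg]
  push_neg
  exact ⟨j, h, by simp [hx]⟩

lemma pair_fixed (hsym : ∀ i j, r i j → r j i) {x : N → Bool} {i j : N}
    (h : r i j) (hx : x j = x i) :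
    ∀ m, (istep r)^[m] x i = x i ∧ (istep r)^[m] x j = x j := by
  intro m
  induction m with
  | zero => exact ⟨rfl, rfl⟩
  | succ m ih =>
    rw [Function.iterate_succ_apply']
    refine ⟨?_, ?_⟩
    · rw [istep_eq_of_agree h (by rw [ih.1, ih.2]; exact hx), ih.1]
    · rw [istep_eq_of_agree (hsym i j h) (by rw [ih.1, ih.2]; exact hx.symm), ih.2]

lemma evfix_propagate {x : N → Bool} {i k : N} (hk : r k i)
    (hi : ∃ t v, ∀ m, t ≤ m → (istep r)^[m] x i = v) :
    ∃ t v, ∀ m, t ≤ m → (istep r)^[m] x k = v := by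
  obtain ⟨t, v, hv⟩ := hi
  by_cases h : ∃ s, t ≤ s ∧ (istep r)^[s] x k = v
  · obtain ⟨s, hs, hks⟩ := h
    refine ⟨s, v, fun m hm => ?_⟩
    obtain ⟨d, rfl⟩ := Nat.exists_eq_add_of_le hm
    clear hm
    induction d with
    | zero => exact hks
    | succ d ih =>
      rw [show s + (d + 1) = (s + d) + 1 from rfl, Function.iterate_succ_apply']
      rw [istep_eq_of_agree hk
        (by rw [hv (s + d) (le_trans hs (Nat.le_add_right s d)), ih])]
      exact ih
  · push_neg at h
    refine ⟨t, !v, fun m hm => ?_⟩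
    have hne := h m hm
    cases hval : (istep r)^[m] x k <;> cases v <;> simp_all

lemma evfix_of_eqv (hsym : ∀ i j, r i j → r j i) {x : N → Bool} {a b : N}
    (h : Relation.EqvGen r a b) :
    (∃ t v, ∀ m, t ≤ m → (istep r)^[m] x a = v) ↔
    (∃ t v, ∀ m, t ≤ m → (istep r)^[m] x b = v) := by
  induction h with
  | rel a b hab =>
    exact ⟨fun ha => evfix_propagate (hsym a b hab) ha, fun hb => evfix_propagate hab hb⟩
  | refl => exact Iff.rfl
  | symm _ _ _ ih => exact ih.symm
  | trans _ _ _ _ _ ih1 ih2 => exact ih1.trans ih2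

lemma disagree_invariant (i₀ : N) {x : N → Bool}
    (hneg : ∀ i j, Relation.EqvGen r i₀ i → Relation.EqvGen r i₀ j → r j i → x i ≠ x j) :
    ∀ m, (∀ k j, Relation.EqvGen r i₀ k → Relation.EqvGen r i₀ j → r j k →
        (istep r)^[m] x k ≠ (istep r)^[m] x j) ∧
      (∀ k, Relation.EqvGen r i₀ k → (istep r)^[m + 1] x k = !((istep r)^[m] x k)) := by
  have flip_of_inv : ∀ m,
      (∀ k j, Relation.EqvGen r i₀ k → Relation.EqvGen r i₀ j → r j k →
        (istep r)^[m] x k ≠ (istep r)^[m] x j) →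
      ∀ k, Relation.EqvGen r i₀ k → (istep r)^[m + 1] x k = !((istep r)^[m] x k) := by
    intro m hinv k hk
    rw [Function.iterate_succ_apply', istep_flip]
    intro j hkj
    have hj : Relation.EqvGen r i₀ j :=
      Relation.EqvGen.trans _ _ _ hk (Relation.EqvGen.rel k j hkj)
    have hne := hinv j k hj hk hkj
    revert hne
    cases (istep r)^[m] x j <;> cases (istep r)^[m] x k <;> simp
  intro m
  induction m with
  | zero =>
    have h0 : ∀ k j, Relation.EqvGen r i₀ k → Relation.EqvGen r i₀ j → r j k →
        (istep r)^[0] x k ≠ (istep r)^[0] x j := by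
      intro k j hk hj hjk
      simpa using hneg k j hk hj hjk
    exact ⟨h0, flip_of_inv 0 h0⟩
  | succ m ih =>
    have hinv : ∀ k j, Relation.EqvGen r i₀ k → Relation.EqvGen r i₀ j → r j k →
        (istep r)^[m + 1] x k ≠ (istep r)^[m + 1] x j := by
      intro k j hk hj hjk
      rw [ih.2 k hk, ih.2 j hj]
      have := ih.1 k j hk hj hjk
      revert this
      cases (istep r)^[m] x k <;> cases (istep r)^[m] x j <;> simp
    exact ⟨hinv, flip_of_inv (m + 1) hinv⟩

end IStep

/-- On a symmetric serial influence profile, the unanimity process from `O`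
converges iff every connected component of every `G_p` contains two agents
`i, j` with `i` an influencer of `j` and agreeing opinions on `p`. -/
theorem stmt15 {N P : Type*} [Fintype N] [Fintype P] (R : P → N → N → Prop)
    (hser : ∀ (p : P) (i : N), ∃ j, R p i j)
    (hsym : ∀ (p : P) (i j : N), R p i j → R p j i)
    (O : N → P → Bool) :
    (∃ n : ℕ, ∀ m, n ≤ m → (upStep R)^[m] O = (upStep R)^[n] O) ↔
      ∀ (p : P) (i₀ : N), ∃ i j : N,
        Relation.EqvGen (R p) i₀ i ∧ Relation.EqvGen (R p) i₀ j ∧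
        R p j i ∧ O i p = O j p := by
  constructor
  · rintro ⟨n, hn⟩ p i₀
    by_contra hcon
    push_neg at hcon
    have hflip := (disagree_invariant (r := R p) i₀ (x := fun j => O j p)
      (fun i j hi hj hji => hcon i j hi hj hji) n).2 i₀ (Relation.EqvGen.refl i₀)
    have h1 := upStep_iter_eq R O p (n + 1) i₀
    have h2 := upStep_iter_eq R O p n i₀
    rw [hn (n + 1) (Nat.le_succ n), h2] at h1
    rw [hflip] at h1
    revert h1
    cases (istep (R p))^[n] (fun j => O j p) i₀ <;> simp
  · intro H
    have key : ∀ (k : N) (p : P),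
        ∃ t v, ∀ m, t ≤ m → (istep (R p))^[m] (fun j => O j p) k = v := by
      intro k p
      obtain ⟨i, j, h1, h2, hji, hx⟩ := H p k
      have fi : ∃ t v, ∀ m, t ≤ m → (istep (R p))^[m] (fun j => O j p) i = v :=
        ⟨0, O i p, fun m _ => (pair_fixed (hsym p) hji hx m).2⟩
      exact (evfix_of_eqv (hsym p) h1).mpr fi
    choose t v hv using key
    refine ⟨Finset.univ.sup (fun q : N × P => t q.1 q.2), fun m hm => ?_⟩
    funext i p
    have hle : t i p ≤ Finset.univ.sup (fun q : N × P => t q.1 q.2) :=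
      Finset.le_sup (f := fun q : N × P => t q.1 q.2) (Finset.mem_univ (i, p))
    rw [upStep_iter_eq, upStep_iter_eq, hv i p m (le_trans hle hm), hv i p _ hle]
end

section
/- Let G be a symmetric serial influence profile. All initial opinion profiles converge under the unanimity process if and only if for every issue p, no connected component of G_p is properly 2-colorable (equivalently, every component contains a cycle of odd length). -/
open Classical in
/-- One step of the unanimity process on a single issue. -/
noncomputable def UPstep {N : Type*} (E : N → N → Prop) (f : N → Bool) : N → Bool :=
  fun i => if ∀ j, E i j → f j = !(f i) then !(f i) else f i

lemma upStep_eq {N P : Type*} (R : P → N → N → Prop) (O : N → P → Bool) (i : N) (p : P) :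
    upStep R O i p = UPstep (R p) (fun j => O j p) i := rfl

lemma iter_eq {N P : Type*} (R : P → N → N → Prop) (O : N → P → Bool) :
    ∀ (t : ℕ) (i : N) (p : P),
      (upStep R)^[t] O i p = (UPstep (R p))^[t] (fun j => O j p) i := by
  intro t
  induction t with
  | zero => intro i p; rfl
  | succ t ih =>
    intro i p
    rw [Function.iterate_succ_apply', Function.iterate_succ_apply', upStep_eq]
    congr 1
    funext j
    exact ih j p

lemma UPstep_noflip {N : Type*} (E : N → N → Prop) (f : N → Bool) (i j : N)
    (hE : E i j) (h : f j = f i) : UPstep E f i = f i := by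
  have hnot : ¬ ∀ k, E i k → f k = !(f i) := by
    intro hall
    have := hall j hE
    rw [h] at this
    simp at this
  simp only [UPstep]
  rw [if_neg hnot]

lemma UPstep_flip {N : Type*} (E : N → N → Prop) (f : N → Bool) (i : N)
    (h : ∀ j, E i j → f j = !(f i)) : UPstep E f i = !(f i) := by
  simp only [UPstep]
  rw [if_pos h]

/-- Eventually constant at vertex `i`. -/
def Frozen {N : Type*} (E : N → N → Prop) (f : N → Bool) (i : N) : Prop :=
  ∃ T, ∀ t, T ≤ t → (UPstep E)^[t] f i = (UPstep E)^[T] f i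

lemma frozen_of_agree {N : Type*} (E : N → N → Prop) (f : N → Bool) (i j : N)
    (hij : E i j) (hji : E j i) (h : f i = f j) :
    ∀ t, (UPstep E)^[t] f i = f i ∧ (UPstep E)^[t] f j = f j := by
  intro t
  induction t with
  | zero => exact ⟨rfl, rfl⟩
  | succ t ih =>
    rw [Function.iterate_succ_apply']
    constructor
    · rw [UPstep_noflip E _ i j hij (by rw [ih.2, ih.1]; exact h.symm), ih.1]
    · rw [UPstep_noflip E _ j i hji (by rw [ih.1, ih.2]; exact h), ih.2]

lemma frozen_spread {N : Type*} (E : N → N → Prop) (f : N → Bool) (i k : N)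
    (hki : E k i) (hi : Frozen E f i) : Frozen E f k := by
  obtain ⟨T, hT⟩ := hi
  by_cases hex : ∃ t, T ≤ t ∧ (UPstep E)^[t] f k = (UPstep E)^[T] f i
  · obtain ⟨t, htT, htk⟩ := hex
    refine ⟨t, ?_⟩
    have key : ∀ s, t ≤ s → (UPstep E)^[s] f k = (UPstep E)^[T] f i := by
      intro s hs
      induction s, hs using Nat.le_induction with
      | base => exact htk
      | succ s hs ih =>
        rw [Function.iterate_succ_apply']
        rw [UPstep_noflip E _ k i hki (by rw [ih, hT s (le_trans htT hs)])]
        exact ih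
    intro s hs
    rw [key s hs, key t le_rfl]
  · push_neg at hex
    refine ⟨T, ?_⟩
    intro t ht
    have h1 : (UPstep E)^[t] f k = !((UPstep E)^[T] f i) := by
      rw [Bool.eq_not_iff]
      exact hex t ht
    have h2 : (UPstep E)^[T] f k = !((UPstep E)^[T] f i) := by
      rw [Bool.eq_not_iff]
      exact hex T le_rfl
    rw [h1, h2]

lemma frozen_eqv {N : Type*} (E : N → N → Prop) (hsymE : ∀ i j, E i j → E j i)
    (f : N → Bool) {a b : N} (h : Relation.EqvGen E a b) :
    Frozen E f a ↔ Frozen E f b := by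
  induction h with
  | rel x y hxy => exact ⟨frozen_spread E f x y (hsymE x y hxy), frozen_spread E f y x hxy⟩
  | refl x => exact Iff.rfl
  | symm x y h ih => exact ih.symm
  | trans x y z h1 h2 ih1 ih2 => exact ih1.trans ih2

/-- On a symmetric serial influence profile, all initial opinion profiles converge
under the unanimity process iff no connected component of any `G_p` is properly
2-colorable. -/
theorem stmt16 {N P : Type*} [Fintype N] [Fintype P] (R : P → N → N → Prop)
    (hser : ∀ (p : P) (i : N), ∃ j, R p i j)
    (hsym : ∀ (p : P) (i j : N), R p i j → R p j i) :
    (∀ O : N → P → Bool, ∃ n : ℕ, ∀ m, n ≤ m →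
        (upStep R)^[m] O = (upStep R)^[n] O) ↔
      ∀ (p : P) (i₀ : N), ¬ ∃ c : N → Bool,
        ∀ i, Relation.EqvGen (R p) i₀ i → ∀ j, R p i j → c i ≠ c j := by
  constructor
  · -- convergence → no 2-coloring
    rintro hconv p i₀ ⟨c, hc⟩
    have osc : ∀ (t : ℕ) (k : N), Relation.EqvGen (R p) i₀ k →
        (UPstep (R p))^[t] c k = (if Even t then c k else !(c k)) := by
      intro t
      induction t with
      | zero => intro k _; simp
      | succ t ih =>
        intro k hk
        rw [Function.iterate_succ_apply']
        have hflip : ∀ j, R p k j →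
            (UPstep (R p))^[t] c j = !((UPstep (R p))^[t] c k) := by
          intro j hkj
          have hj : Relation.EqvGen (R p) i₀ j :=
            Relation.EqvGen.trans i₀ k j hk (Relation.EqvGen.rel k j hkj)
          rw [ih k hk, ih j hj]
          have hcj : c j = !(c k) := by
            have := hc k hk j hkj
            cases hx : c j <;> cases hy : c k <;> simp_all
          rw [hcj]
          by_cases he : Even t <;> simp [he]
        rw [UPstep_flip (R p) _ k hflip, ih k hk]
        by_cases he : Even t <;> simp [he, Nat.even_add_one]
    obtain ⟨n, hn⟩ := hconv (fun j _ => c j)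
    have h := hn (n + 1) (Nat.le_succ n)
    have h2 := congrFun (congrFun h i₀) p
    rw [iter_eq, iter_eq] at h2
    rw [osc (n + 1) i₀ (Relation.EqvGen.refl i₀), osc n i₀ (Relation.EqvGen.refl i₀)] at h2
    by_cases he : Even n <;> simp [he, Nat.even_add_one] at h2
  · -- no 2-coloring → convergence
    intro H O
    have hfro : ∀ (pi : P × N), Frozen (R pi.1) (fun j => O j pi.1) pi.2 := by
      rintro ⟨p, i⟩
      have h := H p i
      push_neg at h
      obtain ⟨k, hk, j, hkj, hagree⟩ := h (fun j => O j p)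
      have hfk : Frozen (R p) (fun j => O j p) k := by
        refine ⟨0, ?_⟩
        intro t _
        have := (frozen_of_agree (R p) (fun j => O j p) k j hkj (hsym p k j hkj) hagree t).1
        simpa using this
      exact (frozen_eqv (R p) (hsym p) (fun j => O j p) hk).mpr hfk
    choose T hT using hfro
    refine ⟨Finset.univ.sup T, ?_⟩
    intro m hm
    funext i p
    rw [iter_eq, iter_eq]
    have hle : T (p, i) ≤ Finset.univ.sup T := Finset.le_sup (Finset.mem_univ (p, i))
    rw [hT (p, i) m (le_trans hle hm), hT (p, i) (Finset.univ.sup T) hle]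
end
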